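/- Let G_n(m⃗) be a caterpillar graph with every m_i ≥ 1 and let e_i be an edge of the central path. Then the face-deletion (BD^λ(G_n(m⃗)), e_i) is isomorphic as a simplicial complex to the join BD^{(λ₁,…,λ_i)}(G_i(m₁,…,m_i)) ∗ BD^{(λ_{i+1},…,λ_n)}(G_{n−i}(m_{i+1},…,m_n)), and the link (BD^λ(G_n(m⃗)) : e_i) is isomorphic to BD^{(λ₁,…,λ_{i−1},λ_i−1)}(G_i(m₁,…,m_i)) ∗ BD^{(λ_{i+1}−1,λ_{i+2},…,λ_n)}(G_{n−i}(m_{i+1},…,m_n)). -/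

import Mathlib

open Finset

/-- Degree of a vertex `v` in a finite set `H` of edges. -/
def edgeDeg {V : Type*} [DecidableEq V] (H : Finset (Sym2 V)) (v : V) : ℕ :=
  (H.filter (fun e => v ∈ e)).card

/-- The bounded degree complex `BD^λ(G)`: its faces are the finite sets `H` of edges of `G`
such that every vertex `v` lies on at most `lam v` edges of `H`. -/
def BD {V : Type*} [DecidableEq V] (G : SimpleGraph V) (lam : V → ℕ) :
    Set (Finset (Sym2 V)) :=
  {H | ↑H ⊆ G.edgeSet ∧ ∀ v, edgeDeg H v ≤ lam v}

/-- The link `(K : a)` of the vertex `a` in `K`. -/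
def linkC {α : Type*} [DecidableEq α] (K : Set (Finset α)) (a : α) : Set (Finset α) :=
  {τ | τ ∈ K ∧ a ∉ τ ∧ insert a τ ∈ K}

/-- The face-deletion `(K, a)` of the vertex `a` in `K`. -/
def delC {α : Type*} [DecidableEq α] (K : Set (Finset α)) (a : α) : Set (Finset α) :=
  {τ | τ ∈ K ∧ a ∉ τ}

/-- The caterpillar graph `G_n(m₁,…,m_n)`: a central path on `Fin n` (the vertices `Sum.inl i`),
with `m i` leaves `Sum.inr ⟨i, _⟩` attached to the `i`-th central vertex. -/
def caterpillar (n : ℕ) (m : Fin n → ℕ) :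
    SimpleGraph (Fin n ⊕ Σ i : Fin n, Fin (m i)) where
  Adj x y :=
    match x, y with
    | Sum.inl i, Sum.inl j => (i : ℕ) + 1 = (j : ℕ) ∨ (j : ℕ) + 1 = (i : ℕ)
    | Sum.inl i, Sum.inr l => i = l.1
    | Sum.inr l, Sum.inl i => i = l.1
    | Sum.inr _, Sum.inr _ => False
  symm := ⟨by rintro (i | l) (j | l') h <;> simp_all <;> tauto⟩
  loopless := ⟨by rintro (i | l) h <;> simp_all⟩

/-- The join of two simplicial complexes (on the disjoint union of the vertex types):
faces are disjoint unions of a face of `K₁` and a face of `K₂`. -/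
def joinC {α β : Type*} [DecidableEq α] [DecidableEq β]
    (K₁ : Set (Finset α)) (K₂ : Set (Finset β)) : Set (Finset (α ⊕ β)) :=
  {σ | ∃ τ₁ ∈ K₁, ∃ τ₂ ∈ K₂, σ = τ₁.image Sum.inl ∪ τ₂.image Sum.inr}

/-- An isomorphism of simplicial complexes: a map of vertex types that is injective on vertices
and induces a bijection between the faces of `K₁` and the faces of `K₂`. -/
def ComplexIso {α β : Type*} [DecidableEq β]
    (K₁ : Set (Finset α)) (K₂ : Set (Finset β)) : Prop :=
  ∃ f : α → β,
    (∀ a b : α, {a} ∈ K₁ → {b} ∈ K₁ → f a = f b → a = b) ∧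
    (∀ σ ∈ K₁, σ.image f ∈ K₂) ∧
    (∀ τ ∈ K₂, ∃ σ ∈ K₁, σ.image f = τ)

namespace BDaux

open Finset Function

variable {V V₁ V₂ : Type*} [DecidableEq V] [DecidableEq V₁] [DecidableEq V₂]

lemma edgeDeg_union {A B : Finset (Sym2 V)} (h : Disjoint A B) (v : V) :
    edgeDeg (A ∪ B) v = edgeDeg A v + edgeDeg B v := by
  unfold edgeDeg
  rw [Finset.filter_union, Finset.card_union_of_disjoint
    (Finset.disjoint_filter_filter h)]

lemma edgeDeg_mono {A B : Finset (Sym2 V)} (h : A ⊆ B) (v : V) :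
    edgeDeg A v ≤ edgeDeg B v :=
  Finset.card_le_card (Finset.filter_subset_filter _ h)

lemma edgeDeg_insert {e : Sym2 V} {S : Finset (Sym2 V)} (he : e ∉ S) (v : V) :
    edgeDeg (insert e S) v = edgeDeg S v + (if v ∈ e then 1 else 0) := by
  unfold edgeDeg
  by_cases hv : v ∈ e
  · rw [Finset.filter_insert, if_pos hv, if_pos hv,
      Finset.card_insert_of_notMem (fun h => he (Finset.mem_filter.1 h).1)]
  · rw [Finset.filter_insert, if_neg hv, if_neg hv, Nat.add_zero]

lemma edgeDeg_image_map {g : V₁ → V} (hg : Injective g) (τ : Finset (Sym2 V₁)) (v : V₁) :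
    edgeDeg (τ.image (Sym2.map g)) (g v) = edgeDeg τ v := by
  unfold edgeDeg
  rw [Finset.filter_image, Finset.card_image_of_injective _ (Sym2.map.injective hg)]
  apply congrArg Finset.card
  apply Finset.filter_congr
  intro e _
  simp only [Sym2.mem_map]
  constructor
  · rintro ⟨a, ha, hav⟩; rwa [← hg hav]
  · exact fun h => ⟨v, h, rfl⟩

lemma edgeDeg_image_zero {g : V₁ → V} {w : V} (hw : ∀ x, g x ≠ w) (τ : Finset (Sym2 V₁)) :
    edgeDeg (τ.image (Sym2.map g)) w = 0 := by
  unfold edgeDeg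
  rw [Finset.card_eq_zero, Finset.filter_eq_empty_iff]
  intro e he
  obtain ⟨e', _, rfl⟩ := Finset.mem_image.1 he
  simp only [Sym2.mem_map]
  rintro ⟨a, _, ha⟩
  exact hw a ha

end BDaux

namespace BDgen

open Finset Function BDaux

variable {V V₁ V₂ : Type*} [DecidableEq V] [DecidableEq V₁] [DecidableEq V₂]
variable {g₁ : V₁ → V} {g₂ : V₂ → V}
variable {G : SimpleGraph V} {G₁ : SimpleGraph V₁} {G₂ : SimpleGraph V₂}

lemma map_ne_map (hdisj : ∀ x y, g₁ x ≠ g₂ y) (a : Sym2 V₁) (b : Sym2 V₂) :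
    Sym2.map g₁ a ≠ Sym2.map g₂ b := by
  induction a using Sym2.ind with | _ x y =>
  induction b using Sym2.ind with | _ x' y' =>
  intro h
  rw [Sym2.map_pair_eq, Sym2.map_pair_eq, Sym2.eq_iff] at h
  rcases h with ⟨h, -⟩ | ⟨h, -⟩ <;> exact hdisj _ _ h

lemma disj_images (hdisj : ∀ x y, g₁ x ≠ g₂ y) (τ₁ : Finset (Sym2 V₁)) (τ₂ : Finset (Sym2 V₂)) :
    Disjoint (τ₁.image (Sym2.map g₁)) (τ₂.image (Sym2.map g₂)) := by
  rw [Finset.disjoint_left]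
  intro e h1 h2
  obtain ⟨a, -, rfl⟩ := Finset.mem_image.1 h1
  obtain ⟨b, -, hb⟩ := Finset.mem_image.1 h2
  exact map_ne_map hdisj a b hb.symm

lemma not_mem_image_map_left (hdisj : ∀ x y, g₁ x ≠ g₂ y) (a₀ : V₁) (b₀ : V₂)
    (τ₁ : Finset (Sym2 V₁)) : s(g₁ a₀, g₂ b₀) ∉ τ₁.image (Sym2.map g₁) := by
  intro h
  obtain ⟨a, -, ha⟩ := Finset.mem_image.1 h
  have : g₂ b₀ ∈ Sym2.map g₁ a := ha ▸ Sym2.mem_mk_right _ _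
  obtain ⟨x, -, hx⟩ := Sym2.mem_map.1 this
  exact hdisj x b₀ hx

lemma not_mem_image_map_right (hdisj : ∀ x y, g₁ x ≠ g₂ y) (a₀ : V₁) (b₀ : V₂)
    (τ₂ : Finset (Sym2 V₂)) : s(g₁ a₀, g₂ b₀) ∉ τ₂.image (Sym2.map g₂) := by
  intro h
  obtain ⟨b, -, hb⟩ := Finset.mem_image.1 h
  have : g₁ a₀ ∈ Sym2.map g₂ b := hb ▸ Sym2.mem_mk_left _ _
  obtain ⟨x, -, hx⟩ := Sym2.mem_map.1 this
  exact hdisj a₀ x hx.symm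

lemma e₀_not_mem_F (hdisj : ∀ x y, g₁ x ≠ g₂ y) (a₀ : V₁) (b₀ : V₂)
    (τ₁ : Finset (Sym2 V₁)) (τ₂ : Finset (Sym2 V₂)) :
    s(g₁ a₀, g₂ b₀) ∉ τ₁.image (Sym2.map g₁) ∪ τ₂.image (Sym2.map g₂) := by
  rw [Finset.mem_union]
  rintro (h | h)
  · exact not_mem_image_map_left hdisj a₀ b₀ τ₁ h
  · exact not_mem_image_map_right hdisj a₀ b₀ τ₂ h

lemma F_edges (hadj₁ : ∀ x y, G₁.Adj x y ↔ G.Adj (g₁ x) (g₁ y))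
    (hadj₂ : ∀ x y, G₂.Adj x y ↔ G.Adj (g₂ x) (g₂ y))
    {τ₁ : Finset (Sym2 V₁)} {τ₂ : Finset (Sym2 V₂)}
    (h₁ : ↑τ₁ ⊆ G₁.edgeSet) (h₂ : ↑τ₂ ⊆ G₂.edgeSet) :
    ↑(τ₁.image (Sym2.map g₁) ∪ τ₂.image (Sym2.map g₂)) ⊆ G.edgeSet := by
  intro e he
  rw [Finset.coe_union, Set.mem_union] at he
  rcases he with he | he
  · obtain ⟨a, ha, rfl⟩ := Finset.mem_coe.1 he |> Finset.mem_image.1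
    induction a using Sym2.ind with | _ x y =>
    rw [Sym2.map_pair_eq, SimpleGraph.mem_edgeSet]
    exact (hadj₁ x y).1 (h₁ ha)
  · obtain ⟨b, hb, rfl⟩ := Finset.mem_coe.1 he |> Finset.mem_image.1
    induction b using Sym2.ind with | _ x y =>
    rw [Sym2.map_pair_eq, SimpleGraph.mem_edgeSet]
    exact (hadj₂ x y).1 (h₂ hb)

lemma F_deg_left (hg₁ : Injective g₁) (hdisj : ∀ x y, g₁ x ≠ g₂ y)
    (τ₁ : Finset (Sym2 V₁)) (τ₂ : Finset (Sym2 V₂)) (v : V₁) :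
    edgeDeg (τ₁.image (Sym2.map g₁) ∪ τ₂.image (Sym2.map g₂)) (g₁ v) = edgeDeg τ₁ v := by
  rw [edgeDeg_union (disj_images hdisj τ₁ τ₂), edgeDeg_image_map hg₁,
    edgeDeg_image_zero (fun y h => hdisj v y h.symm) τ₂, Nat.add_zero]

lemma F_deg_right (hg₂ : Injective g₂) (hdisj : ∀ x y, g₁ x ≠ g₂ y)
    (τ₁ : Finset (Sym2 V₁)) (τ₂ : Finset (Sym2 V₂)) (v : V₂) :
    edgeDeg (τ₁.image (Sym2.map g₁) ∪ τ₂.image (Sym2.map g₂)) (g₂ v) = edgeDeg τ₂ v := by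
  rw [edgeDeg_union (disj_images hdisj τ₁ τ₂), edgeDeg_image_map hg₂,
    edgeDeg_image_zero (fun x h => hdisj x v h) τ₁, Nat.zero_add]

lemma F_deg_zero {w : V} (hw₁ : ∀ x, g₁ x ≠ w) (hw₂ : ∀ y, g₂ y ≠ w)
    (τ₁ : Finset (Sym2 V₁)) (τ₂ : Finset (Sym2 V₂)) :
    edgeDeg (τ₁.image (Sym2.map g₁) ∪ τ₂.image (Sym2.map g₂)) w ≤ 0 := by
  unfold edgeDeg
  rw [Finset.filter_union]
  apply le_of_eq
  rw [Finset.card_eq_zero, Finset.union_eq_empty]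
  constructor <;> · exact Finset.card_eq_zero.1 (edgeDeg_image_zero (by assumption) _)

lemma image_join_eq (τ₁ : Finset (Sym2 V₁)) (τ₂ : Finset (Sym2 V₂)) :
    (τ₁.image Sum.inl ∪ τ₂.image Sum.inr).image (Sum.elim (Sym2.map g₁) (Sym2.map g₂)) =
      τ₁.image (Sym2.map g₁) ∪ τ₂.image (Sym2.map g₂) := by
  rw [Finset.image_union, Finset.image_image, Finset.image_image]
  rfl

lemma elim_injective (hg₁ : Injective g₁) (hg₂ : Injective g₂)
    (hdisj : ∀ x y, g₁ x ≠ g₂ y) :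
    Injective (Sum.elim (Sym2.map g₁) (Sym2.map g₂) : Sym2 V₁ ⊕ Sym2 V₂ → Sym2 V) := by
  rintro (a | a) (b | b) h
  · exact congrArg Sum.inl (Sym2.map.injective hg₁ h)
  · exact absurd h (map_ne_map hdisj a b)
  · exact absurd h.symm (map_ne_map hdisj b a)
  · exact congrArg Sum.inr (Sym2.map.injective hg₂ h)

lemma decompose (hg₁ : Injective g₁) (hg₂ : Injective g₂)
    (hadj₁ : ∀ x y, G₁.Adj x y ↔ G.Adj (g₁ x) (g₁ y))
    (hadj₂ : ∀ x y, G₂.Adj x y ↔ G.Adj (g₂ x) (g₂ y))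
    (a₀ : V₁) (b₀ : V₂)
    (hsplit : ∀ x y, G.Adj x y → s(x, y) = s(g₁ a₀, g₂ b₀) ∨
      (∃ x' y', s(x, y) = s(g₁ x', g₁ y')) ∨ (∃ x' y', s(x, y) = s(g₂ x', g₂ y')))
    {τ : Finset (Sym2 V)} (hτ : ↑τ ⊆ G.edgeSet) (he₀ : s(g₁ a₀, g₂ b₀) ∉ τ) :
    ∃ (τ₁ : Finset (Sym2 V₁)) (τ₂ : Finset (Sym2 V₂)),
      τ = τ₁.image (Sym2.map g₁) ∪ τ₂.image (Sym2.map g₂) ∧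
      ↑τ₁ ⊆ G₁.edgeSet ∧ ↑τ₂ ⊆ G₂.edgeSet ∧
      (∀ v, edgeDeg τ₁ v ≤ edgeDeg τ (g₁ v)) ∧
      (∀ v, edgeDeg τ₂ v ≤ edgeDeg τ (g₂ v)) := by
  classical
  refine ⟨τ.preimage (Sym2.map g₁) ((Sym2.map.injective hg₁).injOn),
    τ.preimage (Sym2.map g₂) ((Sym2.map.injective hg₂).injOn), ?_, ?_, ?_, ?_, ?_⟩
  · rw [Finset.image_preimage, Finset.image_preimage]
    apply Finset.Subset.antisymm
    · intro e he
      have hadj := hτ he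
      induction e using Sym2.ind with | _ x y =>
      rw [SimpleGraph.mem_edgeSet] at hadj
      rcases hsplit x y hadj with h | ⟨x', y', h⟩ | ⟨x', y', h⟩
      · exact absurd (h ▸ he) he₀
      · apply Finset.mem_union_left
        rw [Finset.mem_filter]
        exact ⟨he, ⟨s(x', y'), by rw [Sym2.map_pair_eq, h]⟩⟩
      · apply Finset.mem_union_right
        rw [Finset.mem_filter]
        exact ⟨he, ⟨s(x', y'), by rw [Sym2.map_pair_eq, h]⟩⟩
    · exact Finset.union_subset (Finset.filter_subset _ _) (Finset.filter_subset _ _)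
  · intro e he
    rw [Finset.mem_coe, Finset.mem_preimage] at he
    induction e using Sym2.ind with | _ x y =>
    have := hτ he
    rw [Sym2.map_pair_eq, SimpleGraph.mem_edgeSet] at this
    exact (hadj₁ x y).2 this
  · intro e he
    rw [Finset.mem_coe, Finset.mem_preimage] at he
    induction e using Sym2.ind with | _ x y =>
    have := hτ he
    rw [Sym2.map_pair_eq, SimpleGraph.mem_edgeSet] at this
    exact (hadj₂ x y).2 this
  · intro v
    rw [← edgeDeg_image_map hg₁ _ v, Finset.image_preimage]
    exact edgeDeg_mono (Finset.filter_subset _ _) _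
  · intro v
    rw [← edgeDeg_image_map hg₂ _ v, Finset.image_preimage]
    exact edgeDeg_mono (Finset.filter_subset _ _) _

end BDgen

namespace BDgen

open Finset Function BDaux

variable {V V₁ V₂ : Type*} [DecidableEq V] [DecidableEq V₁] [DecidableEq V₂]
variable {g₁ : V₁ → V} {g₂ : V₂ → V}
variable {G : SimpleGraph V} {G₁ : SimpleGraph V₁} {G₂ : SimpleGraph V₂}
variable {lam : V → ℕ} {lb₁ : V₁ → ℕ} {lb₂ : V₂ → ℕ}

lemma mem_e₀_left (hg₁ : Injective g₁) (hdisj : ∀ x y, g₁ x ≠ g₂ y)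
    (x a₀ : V₁) (b₀ : V₂) : g₁ x ∈ s(g₁ a₀, g₂ b₀) ↔ x = a₀ := by
  rw [Sym2.mem_iff]
  constructor
  · rintro (h | h)
    · exact hg₁ h
    · exact absurd h (hdisj x b₀)
  · rintro rfl; exact Or.inl rfl

lemma mem_e₀_right (hg₂ : Injective g₂) (hdisj : ∀ x y, g₁ x ≠ g₂ y)
    (y b₀ : V₂) (a₀ : V₁) : g₂ y ∈ s(g₁ a₀, g₂ b₀) ↔ y = b₀ := by
  rw [Sym2.mem_iff]
  constructor
  · rintro (h | h)
    · exact absurd h.symm (hdisj a₀ y)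
    · exact hg₂ h
  · rintro rfl; exact Or.inr rfl

lemma F_mem_BD (hg₁ : Injective g₁) (hg₂ : Injective g₂) (hdisj : ∀ x y, g₁ x ≠ g₂ y)
    (hadj₁ : ∀ x y, G₁.Adj x y ↔ G.Adj (g₁ x) (g₁ y))
    (hadj₂ : ∀ x y, G₂.Adj x y ↔ G.Adj (g₂ x) (g₂ y))
    (hlam₁ : ∀ v, lb₁ v ≤ lam (g₁ v)) (hlam₂ : ∀ v, lb₂ v ≤ lam (g₂ v))
    {τ₁ : Finset (Sym2 V₁)} {τ₂ : Finset (Sym2 V₂)}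
    (h₁ : τ₁ ∈ BD G₁ lb₁) (h₂ : τ₂ ∈ BD G₂ lb₂) :
    (τ₁.image (Sym2.map g₁) ∪ τ₂.image (Sym2.map g₂)) ∈ BD G lam := by
  refine ⟨F_edges hadj₁ hadj₂ h₁.1 h₂.1, ?_⟩
  intro w
  by_cases hw1 : ∃ x, g₁ x = w
  · obtain ⟨x, rfl⟩ := hw1
    rw [F_deg_left hg₁ hdisj]
    exact (h₁.2 x).trans (hlam₁ x)
  by_cases hw2 : ∃ y, g₂ y = w
  · obtain ⟨y, rfl⟩ := hw2
    rw [F_deg_right hg₂ hdisj]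
    exact (h₂.2 y).trans (hlam₂ y)
  · exact (F_deg_zero (fun x hx => hw1 ⟨x, hx⟩) (fun y hy => hw2 ⟨y, hy⟩) τ₁ τ₂).trans
      (Nat.zero_le _)

theorem iso_del (hg₁ : Injective g₁) (hg₂ : Injective g₂) (hdisj : ∀ x y, g₁ x ≠ g₂ y)
    (hadj₁ : ∀ x y, G₁.Adj x y ↔ G.Adj (g₁ x) (g₁ y))
    (hadj₂ : ∀ x y, G₂.Adj x y ↔ G.Adj (g₂ x) (g₂ y))
    {a₀ : V₁} {b₀ : V₂}
    (hsplit : ∀ x y, G.Adj x y → s(x, y) = s(g₁ a₀, g₂ b₀) ∨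
      (∃ x' y', s(x, y) = s(g₁ x', g₁ y')) ∨ (∃ x' y', s(x, y) = s(g₂ x', g₂ y')))
    (hlam₁ : ∀ v, lb₁ v = lam (g₁ v)) (hlam₂ : ∀ v, lb₂ v = lam (g₂ v)) :
    ComplexIso (joinC (BD G₁ lb₁) (BD G₂ lb₂)) (delC (BD G lam) s(g₁ a₀, g₂ b₀)) := by
  refine ⟨Sum.elim (Sym2.map g₁) (Sym2.map g₂),
    fun a b _ _ h => elim_injective hg₁ hg₂ hdisj h, ?_, ?_⟩
  · rintro σ ⟨τ₁, h₁, τ₂, h₂, rfl⟩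
    rw [image_join_eq]
    exact ⟨F_mem_BD hg₁ hg₂ hdisj hadj₁ hadj₂ (fun v => le_of_eq (hlam₁ v))
      (fun v => le_of_eq (hlam₂ v)) h₁ h₂, e₀_not_mem_F hdisj a₀ b₀ τ₁ τ₂⟩
  · rintro τ ⟨⟨hE, hD⟩, he₀⟩
    obtain ⟨τ₁, τ₂, hF, hE₁, hE₂, hd₁, hd₂⟩ :=
      decompose hg₁ hg₂ hadj₁ hadj₂ a₀ b₀ hsplit hE he₀
    refine ⟨τ₁.image Sum.inl ∪ τ₂.image Sum.inr,
      ⟨τ₁, ⟨hE₁, fun v => by rw [hlam₁ v]; exact (hd₁ v).trans (hD (g₁ v))⟩,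
       τ₂, ⟨hE₂, fun v => by rw [hlam₂ v]; exact (hd₂ v).trans (hD (g₂ v))⟩, rfl⟩, ?_⟩
    rw [image_join_eq, hF]

theorem iso_link (hg₁ : Injective g₁) (hg₂ : Injective g₂) (hdisj : ∀ x y, g₁ x ≠ g₂ y)
    (hadj₁ : ∀ x y, G₁.Adj x y ↔ G.Adj (g₁ x) (g₁ y))
    (hadj₂ : ∀ x y, G₂.Adj x y ↔ G.Adj (g₂ x) (g₂ y))
    {a₀ : V₁} {b₀ : V₂} (he₀ : G.Adj (g₁ a₀) (g₂ b₀))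
    (hsplit : ∀ x y, G.Adj x y → s(x, y) = s(g₁ a₀, g₂ b₀) ∨
      (∃ x' y', s(x, y) = s(g₁ x', g₁ y')) ∨ (∃ x' y', s(x, y) = s(g₂ x', g₂ y')))
    (hlam₁ : ∀ v, lb₁ v + (if v = a₀ then 1 else 0) = lam (g₁ v))
    (hlam₂ : ∀ v, lb₂ v + (if v = b₀ then 1 else 0) = lam (g₂ v)) :
    ComplexIso (joinC (BD G₁ lb₁) (BD G₂ lb₂)) (linkC (BD G lam) s(g₁ a₀, g₂ b₀)) := by
  have hle₁ : ∀ v, lb₁ v ≤ lam (g₁ v) := fun v => le_trans (Nat.le_add_right _ _) (hlam₁ v).le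
  have hle₂ : ∀ v, lb₂ v ≤ lam (g₂ v) := fun v => le_trans (Nat.le_add_right _ _) (hlam₂ v).le
  refine ⟨Sum.elim (Sym2.map g₁) (Sym2.map g₂),
    fun a b _ _ h => elim_injective hg₁ hg₂ hdisj h, ?_, ?_⟩
  · rintro σ ⟨τ₁, h₁, τ₂, h₂, rfl⟩
    rw [image_join_eq]
    refine ⟨F_mem_BD hg₁ hg₂ hdisj hadj₁ hadj₂ hle₁ hle₂ h₁ h₂,
      e₀_not_mem_F hdisj a₀ b₀ τ₁ τ₂, ?_, ?_⟩
    · rw [Finset.coe_insert]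
      exact Set.insert_subset ((SimpleGraph.mem_edgeSet G).2 he₀)
        (F_edges hadj₁ hadj₂ h₁.1 h₂.1)
    · intro w
      rw [edgeDeg_insert (e₀_not_mem_F hdisj a₀ b₀ τ₁ τ₂)]
      by_cases hw1 : ∃ x, g₁ x = w
      · obtain ⟨x, rfl⟩ := hw1
        rw [F_deg_left hg₁ hdisj, ← hlam₁ x]
        have : (if g₁ x ∈ s(g₁ a₀, g₂ b₀) then 1 else 0) = (if x = a₀ then 1 else 0) := by
          simp only [mem_e₀_left hg₁ hdisj x a₀ b₀]
        rw [this]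
        exact Nat.add_le_add_right (h₁.2 x) _
      by_cases hw2 : ∃ y, g₂ y = w
      · obtain ⟨y, rfl⟩ := hw2
        rw [F_deg_right hg₂ hdisj, ← hlam₂ y]
        have : (if g₂ y ∈ s(g₁ a₀, g₂ b₀) then 1 else 0) = (if y = b₀ then 1 else 0) := by
          simp only [mem_e₀_right hg₂ hdisj y b₀ a₀]
        rw [this]
        exact Nat.add_le_add_right (h₂.2 y) _
      · have h0 := F_deg_zero (g₁ := g₁) (g₂ := g₂)
          (fun x hx => hw1 ⟨x, hx⟩) (fun y hy => hw2 ⟨y, hy⟩) τ₁ τ₂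
        have hw : w ∉ s(g₁ a₀, g₂ b₀) := by
          rw [Sym2.mem_iff]
          rintro (rfl | rfl)
          · exact hw1 ⟨a₀, rfl⟩
          · exact hw2 ⟨b₀, rfl⟩
        rw [if_neg hw]
        omega
  · rintro τ ⟨⟨hE, hD⟩, he₀m, hins⟩
    obtain ⟨τ₁, τ₂, hF, hE₁, hE₂, hd₁, hd₂⟩ :=
      decompose hg₁ hg₂ hadj₁ hadj₂ a₀ b₀ hsplit hE he₀m
    have key₁ : ∀ v, edgeDeg τ₁ v ≤ lb₁ v := by
      intro v
      have h := hins.2 (g₁ v)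
      rw [edgeDeg_insert he₀m] at h
      have hite : (if g₁ v ∈ s(g₁ a₀, g₂ b₀) then 1 else 0) = (if v = a₀ then 1 else 0) := by
        simp only [mem_e₀_left hg₁ hdisj v a₀ b₀]
      rw [hite, ← hlam₁ v] at h
      exact (hd₁ v).trans (Nat.le_of_add_le_add_right h)
    have key₂ : ∀ v, edgeDeg τ₂ v ≤ lb₂ v := by
      intro v
      have h := hins.2 (g₂ v)
      rw [edgeDeg_insert he₀m] at h
      have hite : (if g₂ v ∈ s(g₁ a₀, g₂ b₀) then 1 else 0) = (if v = b₀ then 1 else 0) := by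
        simp only [mem_e₀_right hg₂ hdisj v b₀ a₀]
      rw [hite, ← hlam₂ v] at h
      exact (hd₂ v).trans (Nat.le_of_add_le_add_right h)
    refine ⟨τ₁.image Sum.inl ∪ τ₂.image Sum.inr,
      ⟨τ₁, ⟨hE₁, key₁⟩, τ₂, ⟨hE₂, key₂⟩, rfl⟩, ?_⟩
    rw [image_join_eq, hF]

end BDgen

namespace BDcat

open Finset Function BDaux BDgen

variable {n i : ℕ} {m : Fin n → ℕ}

/-- Embedding of the left caterpillar into the big one. -/
def g1 (m : Fin n → ℕ) (h : i + 1 ≤ n) :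
    (Fin (i + 1) ⊕ Σ j : Fin (i + 1), Fin (m (Fin.castLE h j))) →
      (Fin n ⊕ Σ j : Fin n, Fin (m j))
  | Sum.inl j => Sum.inl (Fin.castLE h j)
  | Sum.inr ⟨j, k⟩ => Sum.inr ⟨Fin.castLE h j, k⟩

/-- Embedding of the right caterpillar into the big one. -/
def g2 (m : Fin n → ℕ) (h : i + 1 ≤ n) :
    (Fin (n - (i + 1)) ⊕ Σ j : Fin (n - (i + 1)), Fin (m ⟨i + 1 + (j : ℕ), by omega⟩)) →
      (Fin n ⊕ Σ j : Fin n, Fin (m j))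
  | Sum.inl j => Sum.inl ⟨i + 1 + (j : ℕ), by omega⟩
  | Sum.inr ⟨j, k⟩ => Sum.inr ⟨⟨i + 1 + (j : ℕ), by omega⟩, k⟩

lemma g1_inj (h : i + 1 ≤ n) : Injective (g1 m h) := by
  rintro (a | ⟨j, k⟩) (b | ⟨j', k'⟩) hc
  · injection hc with hc
    exact congrArg Sum.inl (Fin.ext (by simpa using congrArg Fin.val hc))
  · simp [g1] at hc
  · simp [g1] at hc
  · injection hc with hc
    obtain ⟨h1, h2⟩ := Sigma.mk.inj_iff.1 hc
    have hj : j = j' := Fin.ext (by simpa using congrArg Fin.val h1)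
    subst hj
    exact congrArg Sum.inr (Sigma.ext rfl h2)

lemma g2_inj (h : i + 1 ≤ n) : Injective (g2 m h) := by
  rintro (a | ⟨j, k⟩) (b | ⟨j', k'⟩) hc
  · injection hc with hc
    exact congrArg Sum.inl (Fin.ext (by have := congrArg Fin.val hc; simp at this; omega))
  · simp [g2] at hc
  · simp [g2] at hc
  · injection hc with hc
    obtain ⟨h1, h2⟩ := Sigma.mk.inj_iff.1 hc
    have hj : j = j' := Fin.ext (by have := congrArg Fin.val h1; simp at this; omega)
    subst hj
    exact congrArg Sum.inr (Sigma.ext rfl h2)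

lemma g_disj (h : i + 1 ≤ n) : ∀ x y, g1 m h x ≠ g2 m h y := by
  rintro (a | ⟨j, k⟩) (b | ⟨j', k'⟩) hc
  · injection hc with hc
    have := congrArg Fin.val hc
    simp at this
    omega
  · simp [g1, g2] at hc
  · simp [g1, g2] at hc
  · injection hc with hc
    obtain ⟨h1, -⟩ := Sigma.mk.inj_iff.1 hc
    have := congrArg Fin.val h1
    simp at this
    omega

lemma cat_adj_ll {N : ℕ} {M : Fin N → ℕ} (a b : Fin N) :
    (caterpillar N M).Adj (Sum.inl a) (Sum.inl b) ↔ ((a : ℕ) + 1 = b ∨ (b : ℕ) + 1 = a) :=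
  Iff.rfl

lemma cat_adj_lr {N : ℕ} {M : Fin N → ℕ} (a : Fin N) (l : Σ j : Fin N, Fin (M j)) :
    (caterpillar N M).Adj (Sum.inl a) (Sum.inr l) ↔ a = l.1 :=
  Iff.rfl

lemma cat_adj_rl {N : ℕ} {M : Fin N → ℕ} (a : Fin N) (l : Σ j : Fin N, Fin (M j)) :
    (caterpillar N M).Adj (Sum.inr l) (Sum.inl a) ↔ a = l.1 :=
  Iff.rfl

lemma cat_adj_rr {N : ℕ} {M : Fin N → ℕ} (l l' : Σ j : Fin N, Fin (M j)) :
    ¬ (caterpillar N M).Adj (Sum.inr l) (Sum.inr l') :=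
  id

lemma adj1 (h : i + 1 ≤ n) (x y) :
    (caterpillar (i + 1) (fun j => m (Fin.castLE h j))).Adj x y ↔
      (caterpillar n m).Adj (g1 m h x) (g1 m h y) := by
  rcases x with a | ⟨j, k⟩ <;> rcases y with b | ⟨j', k'⟩
  · rw [cat_adj_ll, g1, g1, cat_adj_ll]
    simp
  · rw [cat_adj_lr, g1, g1, cat_adj_lr]
    simp [Fin.ext_iff]
  · rw [cat_adj_rl, g1, g1, cat_adj_rl]
    simp [Fin.ext_iff]
  · rw [g1, g1]
    exact iff_of_false (cat_adj_rr _ _) (cat_adj_rr _ _)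

lemma adj2 (h : i + 1 ≤ n) (x y) :
    (caterpillar (n - (i + 1)) (fun j => m ⟨i + 1 + (j : ℕ), by omega⟩)).Adj x y ↔
      (caterpillar n m).Adj (g2 m h x) (g2 m h y) := by
  rcases x with a | ⟨j, k⟩ <;> rcases y with b | ⟨j', k'⟩
  · rw [cat_adj_ll, g2, g2, cat_adj_ll]
    simp only [Fin.val_mk]
    omega
  · rw [cat_adj_lr, g2, g2, cat_adj_lr]
    simp [Fin.ext_iff]
  · rw [cat_adj_rl, g2, g2, cat_adj_rl]
    simp [Fin.ext_iff]
  · rw [g2, g2]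
    exact iff_of_false (cat_adj_rr _ _) (cat_adj_rr _ _)


lemma split (hi : i + 1 < n) : ∀ x y, (caterpillar n m).Adj x y →
    s(x, y) = s(g1 m hi.le (Sum.inl ⟨i, Nat.lt_succ_self i⟩),
        g2 m hi.le (Sum.inl ⟨0, by omega⟩)) ∨
    (∃ x' y', s(x, y) = s(g1 m hi.le x', g1 m hi.le y')) ∨
    (∃ x' y', s(x, y) = s(g2 m hi.le x', g2 m hi.le y')) := by
  rintro (a | ⟨j, k⟩) (b | ⟨j', k'⟩) hadj
  · rw [cat_adj_ll] at hadj
    rcases hadj with hab | hba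
    · by_cases hai : (a : ℕ) = i
      · have ha : a = ⟨i, Nat.lt_of_succ_lt hi⟩ := Fin.ext (by simpa using hai)
        have hb : b = ⟨i + 1, hi⟩ := Fin.ext (by simp; omega)
        exact Or.inl (congrArg₂ (fun u v => s(Sum.inl u, Sum.inl v)) ha hb)
      · by_cases hbi : (b : ℕ) ≤ i
        · exact Or.inr (Or.inl ⟨Sum.inl ⟨a.1, by omega⟩, Sum.inl ⟨b.1, by omega⟩, rfl⟩)
        · have hai' : i + 1 ≤ (a : ℕ) := by omega
          refine Or.inr (Or.inr ⟨Sum.inl ⟨a.1 - (i + 1), by omega⟩,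
            Sum.inl ⟨b.1 - (i + 1), by omega⟩, ?_⟩)
          have ha : a = ⟨i + 1 + ((a : ℕ) - (i + 1)), by omega⟩ := Fin.ext (by simp; omega)
          have hb : b = ⟨i + 1 + ((b : ℕ) - (i + 1)), by omega⟩ := Fin.ext (by simp; omega)
          exact congrArg₂ (fun u v => s(Sum.inl u, Sum.inl v)) ha hb
    · by_cases hbi : (b : ℕ) = i
      · have hb : b = ⟨i, Nat.lt_of_succ_lt hi⟩ := Fin.ext (by simpa using hbi)
        have ha : a = ⟨i + 1, hi⟩ := Fin.ext (by simp; omega)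
        exact Or.inl (Sym2.eq_swap.trans
          (congrArg₂ (fun u v => s(Sum.inl u, Sum.inl v)) hb ha))
      · by_cases hai : (a : ℕ) ≤ i
        · exact Or.inr (Or.inl ⟨Sum.inl ⟨a.1, by omega⟩, Sum.inl ⟨b.1, by omega⟩, rfl⟩)
        · refine Or.inr (Or.inr ⟨Sum.inl ⟨a.1 - (i + 1), by omega⟩,
            Sum.inl ⟨b.1 - (i + 1), by omega⟩, ?_⟩)
          have ha : a = ⟨i + 1 + ((a : ℕ) - (i + 1)), by omega⟩ := Fin.ext (by simp; omega)
          have hb : b = ⟨i + 1 + ((b : ℕ) - (i + 1)), by omega⟩ := Fin.ext (by simp; omega)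
          exact congrArg₂ (fun u v => s(Sum.inl u, Sum.inl v)) ha hb
  · have haj : a = j' := hadj
    subst haj
    by_cases hji : (a : ℕ) ≤ i
    · exact Or.inr (Or.inl ⟨Sum.inl ⟨a.1, by omega⟩, Sum.inr ⟨⟨a.1, by omega⟩, k'⟩, rfl⟩)
    · have hex : ∃ r, ∃ hr : i + 1 + r < n, r < n - (i + 1) ∧ a = ⟨i + 1 + r, hr⟩ :=
        ⟨a.1 - (i + 1), by omega, by omega, Fin.ext (by simp; omega)⟩
      obtain ⟨r, hr, hr2, rfl⟩ := hex
      exact Or.inr (Or.inr ⟨Sum.inl ⟨r, hr2⟩, Sum.inr ⟨⟨r, hr2⟩, k'⟩, rfl⟩)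
  · have haj : b = j := hadj
    subst haj
    by_cases hji : (b : ℕ) ≤ i
    · exact Or.inr (Or.inl ⟨Sum.inr ⟨⟨b.1, by omega⟩, k⟩, Sum.inl ⟨b.1, by omega⟩, rfl⟩)
    · have hex : ∃ r, ∃ hr : i + 1 + r < n, r < n - (i + 1) ∧ b = ⟨i + 1 + r, hr⟩ :=
        ⟨b.1 - (i + 1), by omega, by omega, Fin.ext (by simp; omega)⟩
      obtain ⟨r, hr, hr2, rfl⟩ := hex
      exact Or.inr (Or.inr ⟨Sum.inr ⟨⟨r, hr2⟩, k⟩, Sum.inl ⟨r, hr2⟩, rfl⟩)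
  · exact absurd hadj (cat_adj_rr _ _)

end BDcat

/-- deleting (resp. taking the link of) the central-path edge `eᵢ` (joining the
central vertices `i` and `i+1`, 0-indexed) of the bounded degree complex of a caterpillar graph
yields a complex isomorphic to the join of the bounded degree complexes of the two smaller
caterpillar graphs obtained by removing `eᵢ` (for the link, with the labels of the two endpoints
of `eᵢ` lowered by one). -/
theorem BD_caterpillar_del_link (n : ℕ) (m lam : Fin n → ℕ) (hm : ∀ i, 1 ≤ m i)
    (i : ℕ) (hi : i + 1 < n)
    (h₁ : 1 ≤ lam ⟨i, by omega⟩) (h₂ : 1 ≤ lam ⟨i + 1, hi⟩) :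
    ComplexIso
      (joinC
        (BD (caterpillar (i + 1) (fun j => m (Fin.castLE (by omega) j)))
          (Sum.elim (fun j => lam (Fin.castLE (by omega) j)) (fun _ => 1)))
        (BD (caterpillar (n - (i + 1)) (fun j => m ⟨i + 1 + (j : ℕ), by omega⟩))
          (Sum.elim (fun j => lam ⟨i + 1 + (j : ℕ), by omega⟩) (fun _ => 1))))
      (delC (BD (caterpillar n m) (Sum.elim lam (fun _ => 1)))
        s(Sum.inl ⟨i, by omega⟩, Sum.inl ⟨i + 1, hi⟩)) ∧
    ComplexIso
      (joinC
        (BD (caterpillar (i + 1) (fun j => m (Fin.castLE (by omega) j)))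
          (Sum.elim
            (fun j => if (j : ℕ) = i then lam (Fin.castLE (by omega) j) - 1
              else lam (Fin.castLE (by omega) j)) (fun _ => 1)))
        (BD (caterpillar (n - (i + 1)) (fun j => m ⟨i + 1 + (j : ℕ), by omega⟩))
          (Sum.elim
            (fun j => if (j : ℕ) = 0 then lam ⟨i + 1 + (j : ℕ), by omega⟩ - 1
              else lam ⟨i + 1 + (j : ℕ), by omega⟩) (fun _ => 1))))
      (linkC (BD (caterpillar n m) (Sum.elim lam (fun _ => 1)))
        s(Sum.inl ⟨i, by omega⟩, Sum.inl ⟨i + 1, hi⟩)) := by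
  have h : i + 1 ≤ n := Nat.le_of_lt hi
  constructor
  · refine BDgen.iso_del (BDcat.g1_inj h) (BDcat.g2_inj h) (BDcat.g_disj h)
      (BDcat.adj1 h) (BDcat.adj2 h)
      (a₀ := Sum.inl ⟨i, Nat.lt_succ_self i⟩) (b₀ := Sum.inl ⟨0, by omega⟩)
      (BDcat.split hi) ?_ ?_
    · rintro (j | ⟨j, k⟩) <;> rfl
    · rintro (j | ⟨j, k⟩) <;> rfl
  · refine BDgen.iso_link (BDcat.g1_inj h) (BDcat.g2_inj h) (BDcat.g_disj h)
      (BDcat.adj1 h) (BDcat.adj2 h)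
      (a₀ := Sum.inl ⟨i, Nat.lt_succ_self i⟩) (b₀ := Sum.inl ⟨0, by omega⟩)
      ?_ (BDcat.split hi) ?_ ?_
    · exact Or.inl rfl
    · rintro (j | ⟨j, k⟩)
      · by_cases hj : (j : ℕ) = i
        · have hc : Fin.castLE h j = ⟨i, Nat.lt_of_succ_lt hi⟩ := Fin.ext (by simpa using hj)
          have h₁' : 1 ≤ lam (Fin.castLE h j) := by rw [hc]; exact h₁
          have ha : (Sum.inl j : Fin (i + 1) ⊕ Σ j : Fin (i + 1), Fin (m (Fin.castLE h j))) =
              Sum.inl ⟨i, Nat.lt_succ_self i⟩ :=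
            congrArg Sum.inl (Fin.ext (by simpa using hj))
          rw [Sum.elim_inl, if_pos hj, if_pos ha]
          exact Nat.sub_add_cancel h₁'
        · have ha : (Sum.inl j : Fin (i + 1) ⊕ Σ j : Fin (i + 1), Fin (m (Fin.castLE h j))) ≠
              Sum.inl ⟨i, Nat.lt_succ_self i⟩ := by
            intro hq
            injection hq with hq
            exact hj (by simpa using congrArg Fin.val hq)
          rw [Sum.elim_inl, if_neg hj, if_neg ha, Nat.add_zero]
          rfl
      · simp only [Sum.elim_inr]
        rw [if_neg (by simp : (Sum.inr ⟨j, k⟩ : Fin (i + 1) ⊕ Σ j : Fin (i + 1),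
            Fin (m (Fin.castLE h j))) ≠ Sum.inl ⟨i, Nat.lt_succ_self i⟩), Nat.add_zero]
        rfl
    · rintro (j | ⟨j, k⟩)
      · by_cases hj : (j : ℕ) = 0
        · have h₂' : 1 ≤ lam (⟨i + 1 + (j : ℕ), by omega⟩ : Fin n) := by
            rw [show (⟨i + 1 + (j : ℕ), by omega⟩ : Fin n) = ⟨i + 1, hi⟩ from
              Fin.ext (by simp [hj])]
            exact h₂
          have ha : (Sum.inl j : Fin (n - (i + 1)) ⊕ Σ j : Fin (n - (i + 1)),
                Fin (m ⟨i + 1 + (j : ℕ), by omega⟩)) = Sum.inl ⟨0, by omega⟩ :=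
            congrArg Sum.inl (Fin.ext (by simpa using hj))
          rw [Sum.elim_inl, if_pos hj, if_pos ha]
          exact Nat.sub_add_cancel h₂'
        · have ha : (Sum.inl j : Fin (n - (i + 1)) ⊕ Σ j : Fin (n - (i + 1)),
                Fin (m ⟨i + 1 + (j : ℕ), by omega⟩)) ≠ Sum.inl ⟨0, by omega⟩ := by
            intro hq
            injection hq with hq
            exact hj (by simpa using congrArg Fin.val hq)
          rw [Sum.elim_inl, if_neg hj, if_neg ha, Nat.add_zero]
          rfl
      · simp only [Sum.elim_inr]
        rw [if_neg (by simp : (Sum.inr ⟨j, k⟩ : Fin (n - (i + 1)) ⊕ Σ j : Fin (n - (i + 1)),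
            Fin (m ⟨i + 1 + (j : ℕ), by omega⟩)) ≠ Sum.inl ⟨0, by omega⟩), Nat.add_zero]
        rfl
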